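/- For any graphs G and H, ϑ⁻(G) · ϑ⁺(H) ≤ ϑ⁺(G ∗ H), where ∗ is the disjunctive product: the tensor (Kronecker) product B ⊗ C of feasible primal solutions B for ϑ⁻(G) and C for ϑ⁺(H) is feasible for ϑ⁺(G ∗ H) with objective value tr(BJ)·tr(CJ). -/

import Mathlib

open Finset

namespace SimpleGraph

variable {V W : Type*}

/-- The strong graph product. -/
def strongProd (G : SimpleGraph V) (H : SimpleGraph W) : SimpleGraph (V × W) where
  Adj x y := x ≠ y ∧ (x.1 = y.1 ∨ G.Adj x.1 y.1) ∧ (x.2 = y.2 ∨ H.Adj x.2 y.2)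
  symm := by
    refine ⟨?_⟩
    rintro x y ⟨hne, h1, h2⟩
    exact ⟨hne.symm, h1.imp Eq.symm (fun h => G.adj_symm h), h2.imp Eq.symm (fun h => H.adj_symm h)⟩
  loopless := by refine ⟨?_⟩; rintro x ⟨hne, -, -⟩; exact hne rfl

/-- The disjunctive graph product. -/
def disjProd (G : SimpleGraph V) (H : SimpleGraph W) : SimpleGraph (V × W) where
  Adj x y := G.Adj x.1 y.1 ∨ H.Adj x.2 y.2
  symm := ⟨fun _ _ h => h.imp (fun h => G.adj_symm h) (fun h => H.adj_symm h)⟩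
  loopless := ⟨fun x h => h.elim (fun h' => G.irrefl h') (fun h' => H.irrefl h')⟩

/-- A finite set of vertices is independent if no two of its members are adjacent. -/
def IsIndep (G : SimpleGraph V) (s : Finset V) : Prop :=
  ∀ ⦃v⦄, v ∈ s → ∀ ⦃w⦄, w ∈ s → ¬ G.Adj v w

/-- The independence number. -/
noncomputable def alpha (G : SimpleGraph V) [Fintype V] : ℕ :=
  sSup {n | ∃ s : Finset V, G.IsIndep s ∧ s.card = n}

/-- The fractional packing number. -/
noncomputable def alphaStar (G : SimpleGraph V) [Fintype V] : ℝ :=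
  sSup {x | ∃ t : V → ℝ, (∀ v, 0 ≤ t v) ∧
    (∀ C : Finset V, G.IsClique (C : Set V) → ∑ v ∈ C, t v ≤ 1) ∧ x = ∑ v, t v}

/-- The Lovász number. -/
noncomputable def lovTheta (G : SimpleGraph V) [Fintype V] : ℝ :=
  sSup {x | ∃ B : Matrix V V ℝ, B.PosSemidef ∧ B.trace = 1 ∧
    (∀ v w, G.Adj v w → B v w = 0) ∧ x = ∑ v, ∑ w, B v w}

/-- Schrijver's variant of the Lovász number. -/
noncomputable def thetaMinus (G : SimpleGraph V) [Fintype V] : ℝ :=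
  sSup {x | ∃ B : Matrix V V ℝ, B.PosSemidef ∧ B.trace = 1 ∧ (∀ v w, 0 ≤ B v w) ∧
    (∀ v w, G.Adj v w → B v w = 0) ∧ x = ∑ v, ∑ w, B v w}

/-- Szegedy's variant of the Lovász number. -/
noncomputable def thetaPlus (G : SimpleGraph V) [Fintype V] : ℝ :=
  sSup {x | ∃ B : Matrix V V ℝ, B.PosSemidef ∧ B.trace = 1 ∧
    (∀ v w, G.Adj v w → B v w ≤ 0) ∧ x = ∑ v, ∑ w, B v w}

/-- The clique covering number. -/
noncomputable def cliqueCoverNum (G : SimpleGraph V) [Fintype V] : ℕ :=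
  sInf {n | ∃ C : Fin n → Finset V, (∀ i, G.IsClique (C i : Set V)) ∧ ∀ v, ∃ i, v ∈ C i}

/-- The blow-up of a graph along integer vertex weights. -/
def blup (G : SimpleGraph V) (p : V → ℕ) : SimpleGraph (Σ v, Fin (p v)) where
  Adj x y := G.Adj x.1 y.1
  symm := ⟨fun _ _ h => G.adj_symm h⟩
  loopless := ⟨fun x h => G.irrefl h⟩

/-- The weighted independence number (integer weights). -/
noncomputable def alphaWNat (G : SimpleGraph V) [Fintype V] (p : V → ℕ) : ℕ :=
  sSup {n | ∃ s : Finset V, G.IsIndep s ∧ n = ∑ v ∈ s, p v}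

/-- The weighted independence number (real weights). -/
noncomputable def alphaW (G : SimpleGraph V) [Fintype V] (p : V → ℝ) : ℝ :=
  sSup {x | ∃ s : Finset V, G.IsIndep s ∧ x = ∑ v ∈ s, p v}

end SimpleGraph

open SimpleGraph
open scoped RealInnerProductSpace

/-!
If `B` is feasible for `ϑ⁻(G)` and `C` for `ϑ⁺(H)`, then `B ⊗ₖ C` is positive semidefinite with
trace `1`, and its entry at an edge of `G ∗ H` is `B v w * C v' w'`, which vanishes when `vw ∈ E(G)`
and is a nonnegative times a nonpositive number when `v'w' ∈ E(H)`. Its entry sum is the product of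
the entry sums, so every product of feasible values is a feasible value for `ϑ⁺(G ∗ H)`; all these
values are nonnegative, so the product of the suprema is at most the supremum.
-/

theorem Real.sSup_mul_sSup_le {s t : Set ℝ} {c : ℝ} (hs : ∀ x ∈ s, 0 ≤ x) (ht : ∀ y ∈ t, 0 ≤ y)
    (hc : 0 ≤ c) (h : ∀ x ∈ s, ∀ y ∈ t, x * y ≤ c) : sSup s * sSup t ≤ c := by
  rw [mul_comm, ← smul_eq_mul, ← Real.sSup_smul_of_nonneg (Real.sSup_nonneg ht)]
  refine Real.sSup_le (Set.forall_mem_image.2 fun x hx => ?_) hc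
  rw [smul_eq_mul, mul_comm, ← smul_eq_mul, ← Real.sSup_smul_of_nonneg (hs x hx)]
  exact Real.sSup_le (Set.forall_mem_image.2 fun y hy => h x hx y hy) hc

open scoped Kronecker

namespace Matrix

variable {l m n p α : Type*}

theorem sum_sum_kronecker [Fintype l] [Fintype m] [Fintype n] [Fintype p] [CommSemiring α]
    (A : Matrix l m α) (B : Matrix n p α) :
    ∑ i, ∑ j, (A ⊗ₖ B) i j = (∑ i, ∑ j, A i j) * ∑ i, ∑ j, B i j := by
  simp only [kronecker_apply, Fintype.sum_prod_type, sum_mul_sum]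

variable [Fintype n] {B : Matrix n n ℝ}

theorem PosSemidef.sum_sum_nonneg (hB : B.PosSemidef) : 0 ≤ ∑ i, ∑ j, B i j := by
  simpa [dotProduct, mulVec, mul_sum] using hB.dotProduct_mulVec_nonneg fun _ => 1

theorem PosSemidef.two_mul_apply_le (hB : B.PosSemidef) (i j : n) :
    2 * B i j ≤ B i i + B j j := by
  classical
  have h := hB.dotProduct_mulVec_nonneg (Pi.single i 1 - Pi.single j 1)
  have hsymm : B j i = B i j := by simpa using hB.isHermitian.apply i j
  simp only [star_trivial, mulVec_sub, mulVec_single, MulOpposite.op_one, one_smul,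
    dotProduct_sub, sub_dotProduct, single_dotProduct, col_apply, one_mul, hsymm, sub_nonneg,
    tsub_le_iff_right] at h
  linarith

theorem PosSemidef.sum_sum_le_card_mul_trace (hB : B.PosSemidef) :
    ∑ i, ∑ j, B i j ≤ Fintype.card n * B.trace := by
  have hdiag : ∑ i : n, ∑ _j : n, B i i = Fintype.card n * B.trace := by
    simp [trace, mul_sum, mul_comm]
  have := calc
    2 * ∑ i, ∑ j, B i j = ∑ i, ∑ j, 2 * B i j := by simp only [mul_sum]
    _ ≤ ∑ i, ∑ j, (B i i + B j j) := by gcongr with i _ j _; exact hB.two_mul_apply_le i j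
    _ = 2 * (Fintype.card n * B.trace) := by
      simp only [sum_add_distrib]
      rw [sum_comm (f := fun (_ j : n) => B j j), hdiag, two_mul]
  linarith

end Matrix

namespace SimpleGraph

variable {V W : Type*}

theorem kronecker_nonpos_of_disjProd_adj (G : SimpleGraph V) (H : SimpleGraph W)
    {B : Matrix V V ℝ} {C : Matrix W W ℝ} (hB : ∀ v w, 0 ≤ B v w)
    (hBadj : ∀ v w, G.Adj v w → B v w = 0) (hCadj : ∀ v w, H.Adj v w → C v w ≤ 0) :
    ∀ p q, (G.disjProd H).Adj p q → (B ⊗ₖ C) p q ≤ 0 := by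
  rintro ⟨v, v'⟩ ⟨w, w'⟩ (hG | hH)
  · simp [hBadj v w hG]
  · exact mul_nonpos_of_nonneg_of_nonpos (hB v w) (hCadj v' w' hH)

theorem thetaPlus_nonneg (G : SimpleGraph V) [Fintype V] : 0 ≤ G.thetaPlus :=
  Real.sSup_nonneg <| by rintro _ ⟨B, hB, -, -, rfl⟩; exact hB.sum_sum_nonneg

theorem sum_sum_le_thetaPlus (G : SimpleGraph V) [Fintype V] {B : Matrix V V ℝ} (hB : B.PosSemidef)
    (htr : B.trace = 1) (hadj : ∀ v w, G.Adj v w → B v w ≤ 0) :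
    ∑ v, ∑ w, B v w ≤ G.thetaPlus := by
  refine le_csSup ⟨Fintype.card V, ?_⟩ ⟨B, hB, htr, hadj, rfl⟩
  rintro _ ⟨B', hB', htr', -, rfl⟩
  simpa [htr'] using hB'.sum_sum_le_card_mul_trace

end SimpleGraph

theorem thetaMinus_mul_thetaPlus_le_thetaPlus_disjProd {V W : Type*}
    [Fintype V] [Fintype W] (G : SimpleGraph V) (H : SimpleGraph W) :
    G.thetaMinus * H.thetaPlus ≤ (G.disjProd H).thetaPlus := by
  refine Real.sSup_mul_sSup_le ?_ ?_ (thetaPlus_nonneg _) ?_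
  · rintro _ ⟨B, hB, -, -, -, rfl⟩
    exact hB.sum_sum_nonneg
  · rintro _ ⟨C, hC, -, -, rfl⟩
    exact hC.sum_sum_nonneg
  · rintro _ ⟨B, hB, hBtr, hBnn, hBadj, rfl⟩ _ ⟨C, hC, hCtr, hCadj, rfl⟩
    rw [← Matrix.sum_sum_kronecker]
    exact (G.disjProd H).sum_sum_le_thetaPlus (hB.kronecker hC)
      (by rw [Matrix.trace_kronecker, hBtr, hCtr, one_mul])
      (kronecker_nonpos_of_disjProd_adj G H hBnn hBadj hCadj)
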